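/- For any object X in a pseudo-tensor category 𝒟, the sequence X⁰ ⊗ X ⊗ γ_X obtained by tensoring γ_X : X⁰XX⁰X →^{ℰ_X} X⁰X →^{ev_X} 𝟙 → 0 with X⁰ ⊗ X on the left is split exact, i.e., X⁰X ⊗ ev_X is a split epimorphism whose kernel is split off, with X⁰X ⊗ ℰ_X mapping onto that kernel via a split epimorphism. -/

import Mathlib

open CategoryTheory CategoryTheory.Limits CategoryTheory.MonoidalCategory

universe v u

/-- A morphism `f` is split if there is `g` with `f ∘ g ∘ f = f`. -/
def IsSplit {C : Type u} [Category.{v} C] {X Y : C} (f : X ⟶ Y) : Prop :=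
  ∃ g : Y ⟶ X, f ≫ g ≫ f = f

/-- The sequence `X₂ ⟶ X₁ ⟶ X₀ ⟶ 0` is exact, i.e. `q` is a cokernel of `p`. -/
def IsCokernelSeq {C : Type u} [Category.{v} C] [Preadditive C] {X₂ X₁ X₀ : C}
    (p : X₂ ⟶ X₁) (q : X₁ ⟶ X₀) : Prop :=
  p ≫ q = 0 ∧ ∀ ⦃A : C⦄ (h : X₁ ⟶ A), p ≫ h = 0 → ∃! t : X₀ ⟶ A, q ≫ t = h

/-- The sequence `0 ⟶ X₀ ⟶ X₁ ⟶ X₂` is exact, i.e. `i` is a kernel of `p`. -/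
def IsKernelSeq {C : Type u} [Category.{v} C] [Preadditive C] {X₀ X₁ X₂ : C}
    (i : X₀ ⟶ X₁) (p : X₁ ⟶ X₂) : Prop :=
  i ≫ p = 0 ∧ ∀ ⦃A : C⦄ (h : A ⟶ X₁), h ≫ p = 0 → ∃! t : A ⟶ X₀, t ≫ i = h

/-- The morphism `ℰ_X = ev_X ⊗ id_{X⁰⊗X} − id_{X⁰⊗X} ⊗ ev_X`. -/
def calE {C : Type u} [Category.{v} C] [Preadditive C] [MonoidalCategory C]
    (X Xd : C) [ExactPairing X Xd] : (Xd ⊗ X) ⊗ (Xd ⊗ X) ⟶ Xd ⊗ X :=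
  (ε_ X Xd ▷ (Xd ⊗ X)) ≫ (λ_ (Xd ⊗ X)).hom -
    ((Xd ⊗ X) ◁ ε_ X Xd) ≫ (ρ_ (Xd ⊗ X)).hom

/-- `X` (with chosen dual `Xd`) is strongly faithful: `ev_X` is the cokernel of `ℰ_X`. -/
def StronglyFaithful {C : Type u} [Category.{v} C] [Preadditive C]
    [MonoidalCategory C] (X Xd : C) [ExactPairing X Xd] : Prop :=
  IsCokernelSeq (calE X Xd) (ε_ X Xd)

/-!
With `W = X⁰ ⊗ X`, inserting a coevaluation between `X⁰` and `X` gives a map `m : W ⟶ W ⊗ W`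
which, by a zigzag identity, is a section of `W ◁ ev_X` up to the right unitor. So
`s = ρ ≫ m` splits `W ◁ ev_X`, and for `t = (m ▷ W) ≫ α` the two terms of `t ≫ (W ◁ ℰ_X)`
are `𝟙` (the zigzag again) and `(W ◁ ev_X) ≫ s` (interchange). Hence
`t ≫ (W ◁ ℰ_X) + (W ◁ ev_X) ≫ s = 𝟙`, a contraction of `W ⊗ γ_X`, which forces `W ◁ ev_X`
to be a cokernel of `W ◁ ℰ_X`.
-/

theorem isCokernelSeq_of_contraction {C : Type u} [Category.{v} C] [Preadditive C]
    {X₂ X₁ X₀ : C} {p : X₂ ⟶ X₁} {q : X₁ ⟶ X₀} (s : X₀ ⟶ X₁) (t : X₁ ⟶ X₂)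
    (hpq : p ≫ q = 0) (hs : s ≫ q = 𝟙 X₀) (ht : t ≫ p + q ≫ s = 𝟙 X₁) :
    IsCokernelSeq p q := by
  refine ⟨hpq, fun A h hh => ⟨s ≫ h, ?_, fun y hy => ?_⟩⟩
  · have hqs : q ≫ s = 𝟙 X₁ - t ≫ p := eq_sub_of_add_eq' ht
    simp [← Category.assoc q, hqs, Preadditive.sub_comp, hh]
  · rw [← hy, ← Category.assoc, hs, Category.id_comp]

section CoevMiddle

variable {C : Type u} [Category.{v} C] [MonoidalCategory C] (X Xd : C) [ExactPairing X Xd]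

def coevMiddle : Xd ⊗ X ⟶ (Xd ⊗ X) ⊗ (Xd ⊗ X) :=
  (Xd ◁ ((λ_ X).inv ≫ (η_ X Xd ▷ X) ≫ (α_ X Xd X).hom)) ≫ (α_ Xd X (Xd ⊗ X)).inv

theorem coevMiddle_whiskerLeft_ev :
    coevMiddle X Xd ≫ ((Xd ⊗ X) ◁ ε_ X Xd) = (ρ_ (Xd ⊗ X)).inv :=
  calc coevMiddle X Xd ≫ ((Xd ⊗ X) ◁ ε_ X Xd)
      = Xd ◁ ((λ_ X).inv ≫ η_ X Xd ▷ X ≫ (α_ X Xd X).hom ≫ X ◁ ε_ X Xd) ≫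
          (α_ Xd X (𝟙_ C)).inv := by
        simp only [coevMiddle, MonoidalCategory.whiskerLeft_comp, Category.assoc,
          associator_inv_naturality_right]
    _ = (ρ_ (Xd ⊗ X)).inv := by
        rw [ExactPairing.evaluation_coevaluation]
        monoidal

theorem coevMiddle_whiskerRight_comp_left_ev :
    (coevMiddle X Xd ▷ (Xd ⊗ X)) ≫ (α_ _ _ _).hom ≫
        ((Xd ⊗ X) ◁ ((ε_ X Xd ▷ (Xd ⊗ X)) ≫ (λ_ (Xd ⊗ X)).hom)) = 𝟙 _ := by
  set W := Xd ⊗ X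
  calc (coevMiddle X Xd ▷ W) ≫ (α_ W W W).hom ≫ (W ◁ ((ε_ X Xd ▷ W) ≫ (λ_ W).hom))
      = ((coevMiddle X Xd ≫ (W ◁ ε_ X Xd)) ▷ W) ≫ (α_ W (𝟙_ C) W).hom ≫ (W ◁ (λ_ W).hom) := by
        rw [MonoidalCategory.whiskerLeft_comp, ← associator_naturality_middle_assoc,
          comp_whiskerRight, Category.assoc]
    _ = 𝟙 (W ⊗ W) := by
        rw [coevMiddle_whiskerLeft_ev]
        monoidal

theorem coevMiddle_whiskerRight_comp_right_ev :
    (coevMiddle X Xd ▷ (Xd ⊗ X)) ≫ (α_ _ _ _).hom ≫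
        ((Xd ⊗ X) ◁ (((Xd ⊗ X) ◁ ε_ X Xd) ≫ (ρ_ (Xd ⊗ X)).hom)) =
      ((Xd ⊗ X) ◁ ε_ X Xd) ≫ (ρ_ (Xd ⊗ X)).hom ≫ coevMiddle X Xd := by
  set W := Xd ⊗ X
  calc (coevMiddle X Xd ▷ W) ≫ (α_ W W W).hom ≫ (W ◁ ((W ◁ ε_ X Xd) ≫ (ρ_ W).hom))
      = (coevMiddle X Xd ▷ W) ≫ ((W ⊗ W) ◁ ε_ X Xd) ≫ (ρ_ (W ⊗ W)).hom := by
        rw [MonoidalCategory.whiskerLeft_comp, ← associator_naturality_right_assoc]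
        monoidal
    _ = (W ◁ ε_ X Xd) ≫ (ρ_ W).hom ≫ coevMiddle X Xd := by
        rw [← whisker_exchange_assoc, rightUnitor_naturality]

end CoevMiddle

section Preadditive

variable {C : Type u} [Category.{v} C] [Preadditive C] [MonoidalCategory C]
  (X Xd : C) [ExactPairing X Xd]

theorem calE_comp_ev : calE X Xd ≫ ε_ X Xd = 0 := by
  rw [calE, Preadditive.sub_comp, sub_eq_zero, Category.assoc, Category.assoc,
    ← leftUnitor_naturality, ← rightUnitor_naturality, ← whisker_exchange_assoc, unitors_equal]

variable [MonoidalPreadditive C]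

theorem whiskerLeft_calE :
    (Xd ⊗ X) ◁ calE X Xd =
      (Xd ⊗ X) ◁ ((ε_ X Xd ▷ (Xd ⊗ X)) ≫ (λ_ (Xd ⊗ X)).hom) -
        (Xd ⊗ X) ◁ (((Xd ⊗ X) ◁ ε_ X Xd) ≫ (ρ_ (Xd ⊗ X)).hom) :=
  (tensorLeft (Xd ⊗ X)).map_sub

theorem coevMiddle_contraction :
    ((coevMiddle X Xd ▷ (Xd ⊗ X)) ≫ (α_ _ _ _).hom) ≫ ((Xd ⊗ X) ◁ calE X Xd) +
        ((Xd ⊗ X) ◁ ε_ X Xd) ≫ (ρ_ (Xd ⊗ X)).hom ≫ coevMiddle X Xd = 𝟙 _ := by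
  rw [whiskerLeft_calE, Preadditive.comp_sub, Category.assoc,
    coevMiddle_whiskerRight_comp_left_ev, Category.assoc,
    coevMiddle_whiskerRight_comp_right_ev, sub_add_cancel]

end Preadditive

theorem stmt18_general {C : Type u} [Category.{v} C] [Preadditive C]
    [MonoidalCategory C] [MonoidalPreadditive C]
    (X Xd : C) [ExactPairing X Xd] :
    IsCokernelSeq ((Xd ⊗ X) ◁ calE X Xd) ((Xd ⊗ X) ◁ ε_ X Xd) ∧
      ∃ (s : (Xd ⊗ X) ⊗ 𝟙_ C ⟶ (Xd ⊗ X) ⊗ (Xd ⊗ X))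
        (t : (Xd ⊗ X) ⊗ (Xd ⊗ X) ⟶ (Xd ⊗ X) ⊗ ((Xd ⊗ X) ⊗ (Xd ⊗ X))),
        s ≫ ((Xd ⊗ X) ◁ ε_ X Xd) = 𝟙 ((Xd ⊗ X) ⊗ 𝟙_ C) ∧
        t ≫ ((Xd ⊗ X) ◁ calE X Xd) + ((Xd ⊗ X) ◁ ε_ X Xd) ≫ s
          = 𝟙 ((Xd ⊗ X) ⊗ (Xd ⊗ X)) := by
  have hs : ((ρ_ (Xd ⊗ X)).hom ≫ coevMiddle X Xd) ≫ ((Xd ⊗ X) ◁ ε_ X Xd) = 𝟙 _ := by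
    rw [Category.assoc, coevMiddle_whiskerLeft_ev, Iso.hom_inv_id]
  have hpq : ((Xd ⊗ X) ◁ calE X Xd) ≫ ((Xd ⊗ X) ◁ ε_ X Xd) = 0 := by
    rw [← MonoidalCategory.whiskerLeft_comp, calE_comp_ev, MonoidalPreadditive.whiskerLeft_zero]
  have ht := coevMiddle_contraction X Xd
  exact ⟨isCokernelSeq_of_contraction _ _ hpq hs ht, _, _, hs, ht⟩

/-- The sequence `X⁰ ⊗ X ⊗ γ_X` is split exact: it is exact, and it is
contractible via one-sided inverses exhibiting direct sum decompositions. -/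
theorem stmt18 {k : Type*} [Field k] {C : Type u} [Category.{v} C] [Preadditive C]
    [Linear k C] [MonoidalCategory C] [SymmetricCategory C] [MonoidalPreadditive C]
    [MonoidalLinear k C] [RigidCategory C] [IsIdempotentComplete C]
    (hEnd : Function.Bijective fun a : k => a • (𝟙 (𝟙_ C)))
    (X Xd : C) [ExactPairing X Xd] :
    IsCokernelSeq ((Xd ⊗ X) ◁ calE X Xd) ((Xd ⊗ X) ◁ ε_ X Xd) ∧
      ∃ (s : (Xd ⊗ X) ⊗ 𝟙_ C ⟶ (Xd ⊗ X) ⊗ (Xd ⊗ X))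
        (t : (Xd ⊗ X) ⊗ (Xd ⊗ X) ⟶ (Xd ⊗ X) ⊗ ((Xd ⊗ X) ⊗ (Xd ⊗ X))),
        s ≫ ((Xd ⊗ X) ◁ ε_ X Xd) = 𝟙 ((Xd ⊗ X) ⊗ 𝟙_ C) ∧
        t ≫ ((Xd ⊗ X) ◁ calE X Xd) + ((Xd ⊗ X) ◁ ε_ X Xd) ≫ s
          = 𝟙 ((Xd ⊗ X) ⊗ (Xd ⊗ X)) :=
  stmt18_general X Xd
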